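/- In a vector lattice X with x₀ ∈ X, if x ∼_{x₀} y and x ∼_{x₀} −y, then each of x, x ∨ y, x ∧ y, |x| ∨ |y|, and |x| ∧ |y| is related to 0 by ∼_{x₀}. -/
import Mathlib

def VLperp {X : Type*} [Lattice X] [AddCommGroup X] (u v : X) : Prop :=
  abs (abs u - abs v) = abs u + abs v

def VLsim {X : Type*} [Lattice X] [AddCommGroup X] (x₀ x y : X) : Prop :=
  VLperp (x - y) x₀

section aux
variable {X : Type*} [Lattice X] [AddCommGroup X]
  [CovariantClass X X (· + ·) (· ≤ ·)] [Module ℝ X]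

lemma half_zero {z : X} (h : z + z = 0) : z = 0 := by
  have h2 : (2:ℝ) • z = 0 := by rw [two_smul]; exact h
  calc z = (2:ℝ)⁻¹ • ((2:ℝ) • z) := by rw [smul_smul]; norm_num
    _ = 0 := by rw [h2, smul_zero]

lemma VLperp_iff (u v : X) : VLperp u v ↔ |u| ⊓ |v| = 0 := by
  unfold VLperp
  rw [abs_sub_comm, ← sup_sub_inf_eq_abs_sub, ← inf_add_sup (|u|) (|v|)]
  constructor
  · intro h
    apply half_zero
    have h2 : |u| ⊓ |v| + |u| ⊓ |v| =
        (|u| ⊓ |v| + |u| ⊔ |v|) - (|u| ⊔ |v| - |u| ⊓ |v|) := by abel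
    rw [← h, sub_self] at h2
    exact h2
  · intro h; rw [h]; simp

lemma inf_zero_mono {a c e : X} (h : a ⊓ c = 0) (he0 : 0 ≤ e) (hea : e ≤ a)
    (hc : 0 ≤ c) : e ⊓ c = 0 :=
  le_antisymm (h ▸ inf_le_inf_right c hea) (le_inf he0 hc)

lemma inf_zero_add {a b c : X} (ha : 0 ≤ a) (hb : 0 ≤ b) (hc : 0 ≤ c)
    (h1 : a ⊓ c = 0) (h2 : b ⊓ c = 0) : (a + b) ⊓ c = 0 := by
  set d := (a + b) ⊓ c with hd
  have hd0 : 0 ≤ d := le_inf (add_nonneg ha hb) hc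
  have hdc : d ≤ c := inf_le_right
  have key : d = (d - a) ⊔ (d - c) := by rw [← sub_inf, h1, sub_zero]
  have hdb : d ≤ b := by
    rw [key]
    refine sup_le ?_ ?_
    · have : d ≤ a + b := inf_le_left
      rw [sub_le_iff_le_add, add_comm]; exact this
    · exact (sub_nonpos.2 hdc).trans hb
  exact le_antisymm (h2 ▸ le_inf hdb hdc) hd0

lemma half_smul_le [PosSMulMono ℝ X] {s : X} (hs : 0 ≤ s) : (2⁻¹:ℝ) • s ≤ s := by
  have h : s = (2⁻¹:ℝ) • s + (2⁻¹:ℝ) • s := by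
    rw [← add_smul]; norm_num
  calc (2⁻¹:ℝ) • s = 0 + (2⁻¹:ℝ) • s := by rw [zero_add]
    _ ≤ (2⁻¹:ℝ) • s + (2⁻¹:ℝ) • s := by
        gcongr
        exact smul_nonneg (by norm_num) hs
    _ = s := h.symm

lemma abs_le_of_double [PosSMulMono ℝ X] {z s : X} (hs : 0 ≤ s)
    (h : |z + z| ≤ s) : |z| ≤ s := by
  have hz : z = (2⁻¹:ℝ) • (z + z) := by
    rw [smul_add, ← add_smul]; norm_num
  have habs : |z| ≤ (2⁻¹:ℝ) • |z + z| := by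
    conv_lhs => rw [hz]
    refine abs_le'.2 ⟨?_, ?_⟩
    · exact smul_le_smul_of_nonneg_left (le_abs_self _) (by norm_num)
    · rw [← smul_neg]
      exact smul_le_smul_of_nonneg_left (neg_le_abs _) (by norm_num)
  calc |z| ≤ (2⁻¹:ℝ) • |z + z| := habs
    _ ≤ (2⁻¹:ℝ) • s := smul_le_smul_of_nonneg_left h (by norm_num)
    _ ≤ s := half_smul_le hs

end aux

theorem strong_relation_both {X : Type*} [Lattice X] [AddCommGroup X]
    [CovariantClass X X (· + ·) (· ≤ ·)] [Module ℝ X] [PosSMulMono ℝ X]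
    (x₀ x y : X) (h1 : VLsim x₀ x y) (h2 : VLsim x₀ x (-y)) :
    VLsim x₀ x 0 ∧ VLsim x₀ (x ⊔ y) 0 ∧ VLsim x₀ (x ⊓ y) 0 ∧
      VLsim x₀ (abs x ⊔ abs y) 0 ∧ VLsim x₀ (abs x ⊓ abs y) 0 := by
  set c := |x₀| with hc
  have hc0 : 0 ≤ c := abs_nonneg _
  have hA : |x - y| ⊓ c = 0 := (VLperp_iff _ _).1 h1
  have hB : |x + y| ⊓ c = 0 := by
    have := (VLperp_iff _ _).1 h2
    rwa [sub_neg_eq_add] at this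
  have hs : (|x - y| + |x + y|) ⊓ c = 0 :=
    inf_zero_add (abs_nonneg _) (abs_nonneg _) hc0 hA hB
  have hs0 : (0:X) ≤ |x - y| + |x + y| := add_nonneg (abs_nonneg _) (abs_nonneg _)
  -- |x| ⊓ c = 0
  have hxx : |x + x| ≤ |x - y| + |x + y| := by
    have : x + x = (x - y) + (x + y) := by abel
    rw [this]; exact abs_add_le _ _
  have hx : |x| ⊓ c = 0 :=
    inf_zero_mono hs (abs_nonneg _) (abs_le_of_double hs0 hxx) hc0
  -- |y| ⊓ c = 0
  have hyy : |y + y| ≤ |x - y| + |x + y| := by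
    have h' : y + y = (x + y) - (x - y) := by abel
    rw [h']
    calc |(x + y) - (x - y)| ≤ |x + y| + |x - y| := by
          rw [sub_eq_add_neg]
          exact (abs_add_le _ _).trans (by rw [abs_neg])
      _ = |x - y| + |x + y| := by rw [add_comm]
  have hy : |y| ⊓ c = 0 :=
    inf_zero_mono hs (abs_nonneg _) (abs_le_of_double hs0 hyy) hc0
  have hsum : (|x| + |y|) ⊓ c = 0 :=
    inf_zero_add (abs_nonneg _) (abs_nonneg _) hc0 hx hy
  have key : ∀ z : X, |z| ≤ |x| + |y| → VLsim x₀ z 0 := by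
    intro z hz
    rw [VLsim, sub_zero, VLperp_iff]
    exact inf_zero_mono hsum (abs_nonneg _) hz hc0
  have hxle : |x| ≤ |x| + |y| := le_add_of_nonneg_right (abs_nonneg _)
  have hyle : |y| ≤ |x| + |y| := le_add_of_nonneg_left (abs_nonneg _)
  refine ⟨key x hxle, key _ ?_, key _ ?_, key _ ?_, key _ ?_⟩
  · refine abs_le'.2 ⟨sup_le ((le_abs_self x).trans hxle) ((le_abs_self y).trans hyle), ?_⟩
    rw [neg_sup]
    exact inf_le_left.trans ((neg_le_abs x).trans hxle)
  · refine abs_le'.2 ⟨inf_le_left.trans ((le_abs_self x).trans hxle), ?_⟩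
    rw [neg_inf]
    exact sup_le ((neg_le_abs x).trans hxle) ((neg_le_abs y).trans hyle)
  · rw [abs_of_nonneg (le_sup_of_le_left (abs_nonneg x))]
    exact sup_le hxle hyle
  · rw [abs_of_nonneg (le_inf (abs_nonneg x) (abs_nonneg y))]
    exact inf_le_left.trans hxle
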